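/- Let T be an unbounded self-adjoint operator on a complex Hilbert space H. On H × H define A with domain D(T) × D(T) by A(x, y) = (Ty, Tx), and B with domain D(T) × D(T) by B(x, y) = (Tx, −Ty). Then A and B are self-adjoint with D(A) = D(B), the compositions A ∘ A and B ∘ B are equal (both equal to (x, y) ↦ ((T∘T)x, (T∘T)y) on D(T∘T) × D(T∘T)), so A ∘ A − B ∘ B is the zero operator on its domain, while A ∘ B − B ∘ A has domain D(T∘T) × D(T∘T), is given by (x, y) ↦ (−2(T∘T)y, 2(T∘T)x), and is unbounded. -/

import Mathlib

/- Unbounded (partially defined) operators on a complex Hilbert space are modelled by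
Mathlib's `LinearPMap` (`H →ₗ.[ℂ] H`).  `T†` is the adjoint, `T.IsClosed` means the graph
of `T` is closed, and `f - g` is the difference with domain `D(f) ⊓ D(g)`. -/

noncomputable section

open LinearPMap

/-- The composition `S ∘ T` of two partially defined linear operators, with its natural
(maximal) domain `{x ∈ D(T) : T x ∈ D(S)}`, acting by `x ↦ S (T x)`. -/
def pComp {R E F G : Type*} [Ring R] [AddCommGroup E] [Module R E]
    [AddCommGroup F] [Module R F] [AddCommGroup G] [Module R G]
    (S : F →ₗ.[R] G) (T : E →ₗ.[R] F) : E →ₗ.[R] G where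
  domain := (S.domain.comap T.toFun).map T.domain.subtype
  toFun := (S.toFun.comp (T.toFun.restrict (q := S.domain) fun _ hx => hx)).comp
    (Submodule.equivMapOfInjective T.domain.subtype T.domain.injective_subtype
      (S.domain.comap T.toFun)).symm.toLinearMap

/-- A partially defined operator is bounded if `‖T x‖ ≤ C‖x‖` on its domain for some `C ≥ 0`. -/
def IsBddOp {H : Type*} [NormedAddCommGroup H] [InnerProductSpace ℂ H]
    (T : H →ₗ.[ℂ] H) : Prop :=
  ∃ C : ℝ, 0 ≤ C ∧ ∀ x : T.domain, ‖T x‖ ≤ C * ‖(x : H)‖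

/-- A partially defined operator is positive if `⟪T x, x⟫` is real and nonnegative
for every `x` in its domain. -/
def IsPosOp {H : Type*} [NormedAddCommGroup H] [InnerProductSpace ℂ H]
    (T : H →ₗ.[ℂ] H) : Prop :=
  ∀ x : T.domain, 0 ≤ (inner ℂ (T x) ((x : H)) : ℂ).re ∧ (inner ℂ (T x) ((x : H)) : ℂ).im = 0

/-- A (bundled) complex Hilbert space. -/
structure HilbertC where
  carrier : Type
  [normed : NormedAddCommGroup carrier]
  [ips : InnerProductSpace ℂ carrier]
  [complete : CompleteSpace carrier]

attribute [instance] HilbertC.normed HilbertC.ips HilbertC.complete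

/-- The product Hilbert space `H × H` (with inner product
`⟪(x₁,y₁),(x₂,y₂)⟫ = ⟪x₁,x₂⟫ + ⟪y₁,y₂⟫`), i.e. the `L²`-product `WithLp 2 (H × H)`. -/
abbrev HxH (H : Type) [NormedAddCommGroup H] [InnerProductSpace ℂ H] : Type :=
  WithLp 2 (H × H)

/-- The canonical linear identification of the product Hilbert space `HxH H` with `H × H`. -/
abbrev prodE (H : Type) [NormedAddCommGroup H] [InnerProductSpace ℂ H] :
    HxH H ≃ₗ[ℂ] H × H := WithLp.linearEquiv 2 ℂ (H × H)

/-! `A = σ ∘ (T ⊕ T)` and `B = ν ∘ (T ⊕ T)`, where `σ (x, y) = (y, x)` and `ν (x, y) = (x, -y)`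
are self-adjoint unitary involutions whose graphs commute with that of `T ⊕ T`. Working with
graphs rather than domains, `A` and `B` inherit self-adjointness from `T`,
`A ∘ A = B ∘ B = T² ⊕ T²`, and `A ∘ B - B ∘ A = (νσ - σν)(T² ⊕ T²)` with
`νσ - σν = [[0, -2], [2, 0]]`.

On `H × 0` the commutator is `2 T²`, so if it were bounded, `T²` would be bounded on `D(T²)`.
As `‖T x‖² = ⟪x, T² x⟫`, this bounds `T` on `D(T²)`, hence on `D(T)` because `D(T²)` is dense
(von Neumann: `1 + T²` is onto). -/

open scoped InnerProductSpace

section Composition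

variable {R E F G : Type*} [Ring R] [AddCommGroup E] [Module R E]
  [AddCommGroup F] [Module R F] [AddCommGroup G] [Module R G]
  {S : F →ₗ.[R] G} {T : E →ₗ.[R] F}

theorem mem_pComp_domain {x : E} :
    x ∈ (pComp S T).domain ↔ ∃ hx : x ∈ T.domain, T ⟨x, hx⟩ ∈ S.domain := by
  constructor
  · rintro ⟨y, hy, rfl⟩
    exact ⟨y.2, hy⟩
  · rintro ⟨hx, hTx⟩
    exact ⟨⟨x, hx⟩, hTx, rfl⟩

theorem pComp_apply {x : E} (hx : x ∈ T.domain) (hTx : T ⟨x, hx⟩ ∈ S.domain)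
    (hST : x ∈ (pComp S T).domain) : pComp S T ⟨x, hST⟩ = S ⟨T ⟨x, hx⟩, hTx⟩ := by
  let e := Submodule.equivMapOfInjective T.domain.subtype T.domain.injective_subtype
    (S.domain.comap T.toFun)
  have he : e.symm ⟨x, hST⟩ = ⟨⟨x, hx⟩, hTx⟩ := by
    rw [LinearEquiv.symm_apply_eq]
    rfl
  change S.toFun ((T.toFun.restrict fun _ hx => hx) (e.symm ⟨x, hST⟩)) = _
  rw [he]
  rfl

theorem mem_graph_pComp_iff {x : E} {z : G} :
    (x, z) ∈ (pComp S T).graph ↔ ∃ y, (x, y) ∈ T.graph ∧ (y, z) ∈ S.graph := by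
  simp only [LinearPMap.mem_graph_iff]
  constructor
  · rintro ⟨⟨x, hST⟩, rfl, rfl⟩
    obtain ⟨hx, hTx⟩ := mem_pComp_domain.mp hST
    exact ⟨T ⟨x, hx⟩, ⟨⟨x, hx⟩, rfl, rfl⟩, ⟨⟨_, hTx⟩, rfl, (pComp_apply hx hTx hST).symm⟩⟩
  · rintro ⟨y, ⟨⟨x, hx⟩, rfl, rfl⟩, ⟨⟨_, hTx⟩, rfl, rfl⟩⟩
    have hST := mem_pComp_domain.mpr ⟨hx, hTx⟩
    exact ⟨⟨x, hST⟩, rfl, pComp_apply hx hTx hST⟩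

end Composition

section SelfAdjoint

variable {𝕜 E : Type*} [RCLike 𝕜] [NormedAddCommGroup E] [InnerProductSpace 𝕜 E]
  [CompleteSpace E] {T : E →ₗ.[𝕜] E}

theorem LinearPMap.isSelfAdjoint_iff_mem_graph_iff (hT : Dense (T.domain : Set E)) :
    IsSelfAdjoint T ↔
      ∀ y w, (y, w) ∈ T.graph ↔ ∀ a b, (a, b) ∈ T.graph → ⟪b, y⟫_𝕜 = ⟪a, w⟫_𝕜 := by
  have hgraph : T† = T ↔ T.graph.adjoint = T.graph := by
    rw [← LinearPMap.adjoint_graph_eq_graph_adjoint hT]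
    exact ⟨congrArg _, LinearPMap.eq_of_eq_graph⟩
  rw [isSelfAdjoint_def, hgraph, SetLike.ext_iff, Prod.forall]
  simp only [Submodule.mem_adjoint_iff, sub_eq_zero]
  exact forall₂_congr fun _ _ => iff_comm

theorem IsSelfAdjoint.mem_graph_iff_inner (hT : IsSelfAdjoint T) {y w : E} :
    (y, w) ∈ T.graph ↔ ∀ a b, (a, b) ∈ T.graph → ⟪b, y⟫_𝕜 = ⟪a, w⟫_𝕜 :=
  (LinearPMap.isSelfAdjoint_iff_mem_graph_iff hT.dense_domain).mp hT y w

theorem IsSelfAdjoint.inner_eq_of_mem_graph (hT : IsSelfAdjoint T) {a b c d : E}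
    (hab : (a, b) ∈ T.graph) (hcd : (c, d) ∈ T.graph) : ⟪b, c⟫_𝕜 = ⟪a, d⟫_𝕜 :=
  hT.mem_graph_iff_inner.mp hcd a b hab

theorem IsSelfAdjoint.norm_sq_le_of_mem_graph (hT : IsSelfAdjoint T) {x y z : E}
    (hxy : (x, y) ∈ T.graph) (hyz : (y, z) ∈ T.graph) : ‖y‖ ^ 2 ≤ ‖x‖ * ‖z‖ :=
  calc ‖y‖ ^ 2 = RCLike.re ⟪y, y⟫_𝕜 := (inner_self_eq_norm_sq y).symm
    _ = RCLike.re ⟪x, z⟫_𝕜 := by rw [hT.inner_eq_of_mem_graph hxy hyz]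
    _ ≤ ‖⟪x, z⟫_𝕜‖ := RCLike.re_le_norm _
    _ ≤ ‖x‖ * ‖z‖ := norm_inner_le_norm x z

/-- `1 + T²` is onto: if `(x, T x)` is the projection of `(z, 0)` onto the closed graph of `T`,
orthogonality of the remainder `(z - x, -T x)` to the graph says exactly that `T (T x) = z - x`. -/
theorem IsSelfAdjoint.exists_mem_graph_pComp_self_sub (hT : IsSelfAdjoint T) (z : E) :
    ∃ x, (x, z - x) ∈ (pComp T T).graph := by
  let Γ : Submodule 𝕜 (WithLp 2 (E × E)) :=
    T.graph.comap (WithLp.linearEquiv 2 𝕜 (E × E)).toLinearMap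
  have hΓ : IsClosed (Γ : Set (WithLp 2 (E × E))) :=
    hT.isClosed.preimage (WithLp.prod_continuous_ofLp 2 E E)
  have : CompleteSpace Γ := hΓ.completeSpace_coe
  obtain ⟨g, hg, q, hq, hzgq⟩ := Γ.exists_add_mem_mem_orthogonal (WithLp.toLp 2 (z, 0))
  refine ⟨g.fst, mem_graph_pComp_iff.mpr ⟨g.snd, hg, hT.mem_graph_iff_inner.mpr fun a b hab => ?_⟩⟩
  have hq' : q = WithLp.toLp 2 (z - g.fst, -g.snd) := by
    refine WithLp.ofLp_injective 2 ?_
    ext <;> simp [eq_sub_of_add_eq' hzgq.symm]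
  have horth := (Submodule.mem_orthogonal Γ q).mp hq (WithLp.toLp 2 (a, b)) hab
  rw [hq', WithLp.prod_inner_apply, inner_neg_right, add_neg_eq_zero] at horth
  exact horth.symm

theorem IsSelfAdjoint.dense_pComp_self_domain (hT : IsSelfAdjoint T) :
    Dense ((pComp T T).domain : Set E) := by
  have hbot : (pComp T T).domainᗮ = ⊥ := by
    refine (Submodule.eq_bot_iff _).mpr fun z hz => ?_
    obtain ⟨x, hx⟩ := hT.exists_mem_graph_pComp_self_sub z
    obtain ⟨y, hxy, hyz⟩ := mem_graph_pComp_iff.mp hx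
    have hxz : ⟪x, z⟫_𝕜 = 0 :=
      (Submodule.mem_orthogonal _ z).mp hz x (LinearPMap.mem_domain_of_mem_graph hx)
    have hsum : ⟪x, x⟫_𝕜 + ⟪y, y⟫_𝕜 = 0 := by
      rw [hT.inner_eq_of_mem_graph hxy hyz, inner_sub_right, hxz]
      ring
    have hnorm : ‖x‖ ^ 2 + ‖y‖ ^ 2 = 0 := by
      simpa only [_root_.map_add, _root_.map_zero, inner_self_eq_norm_sq] using
        congrArg RCLike.re hsum
    have hx0 : x = 0 := norm_eq_zero.mp (by nlinarith [sq_nonneg ‖x‖, sq_nonneg ‖y‖])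
    simpa [hx0] using (pComp T T).graph_fst_eq_zero_snd hx hx0
  rw [Submodule.dense_iff_topologicalClosure_eq_top,
    ← Submodule.orthogonal_orthogonal_eq_closure, hbot, Submodule.bot_orthogonal_eq_top]

theorem IsSelfAdjoint.norm_le_of_dense (hT : IsSelfAdjoint T) {D : Submodule 𝕜 E}
    (hD : Dense (D : Set E)) {M : ℝ} (hM : 0 ≤ M)
    (hbound : ∀ c ∈ D, ∃ d, (c, d) ∈ T.graph ∧ ‖d‖ ≤ M * ‖c‖) {a b : E}
    (hab : (a, b) ∈ T.graph) : ‖b‖ ≤ M * ‖a‖ := by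
  have hinner : ∀ c, ‖⟪b, c⟫_𝕜‖ ≤ M * ‖a‖ * ‖c‖ := by
    have hclosed : IsClosed {c | ‖⟪b, c⟫_𝕜‖ ≤ M * ‖a‖ * ‖c‖} :=
      isClosed_le (by fun_prop) (by fun_prop)
    refine fun c => closure_minimal (fun c hc => ?_) hclosed (hD.closure_eq ▸ Set.mem_univ c)
    obtain ⟨d, hcd, hd⟩ := hbound c hc
    calc ‖⟪b, c⟫_𝕜‖ = ‖⟪a, d⟫_𝕜‖ := by rw [hT.inner_eq_of_mem_graph hab hcd]
      _ ≤ ‖a‖ * ‖d‖ := norm_inner_le_norm a d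
      _ ≤ ‖a‖ * (M * ‖c‖) := by gcongr
      _ = M * ‖a‖ * ‖c‖ := by ring
  rcases (norm_nonneg b).eq_or_lt with hb | hb
  · rw [← hb]
    positivity
  · refine le_of_mul_le_mul_right ?_ hb
    calc ‖b‖ * ‖b‖ = RCLike.re ⟪b, b⟫_𝕜 := (inner_self_eq_norm_mul_norm b).symm
      _ ≤ ‖⟪b, b⟫_𝕜‖ := RCLike.re_le_norm _
      _ ≤ M * ‖a‖ * ‖b‖ := hinner b

end SelfAdjoint

theorem IsSelfAdjoint.isBddOp_of_isBddOp_pComp_self {H : Type*} [NormedAddCommGroup H]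
    [InnerProductSpace ℂ H] [CompleteSpace H] {T : H →ₗ.[ℂ] H} (hT : IsSelfAdjoint T)
    (hT2 : IsBddOp (pComp T T)) : IsBddOp T := by
  obtain ⟨C, hC, hCT⟩ := hT2
  have hbound : ∀ c ∈ (pComp T T).domain, ∃ d, (c, d) ∈ T.graph ∧ ‖d‖ ≤ √C * ‖c‖ := by
    intro c hc
    obtain ⟨hc₁, hc₂⟩ := mem_pComp_domain.mp hc
    refine ⟨T ⟨c, hc₁⟩, T.mem_graph ⟨c, hc₁⟩, ?_⟩
    have hsq := hT.norm_sq_le_of_mem_graph (T.mem_graph ⟨c, hc₁⟩) (T.mem_graph ⟨_, hc₂⟩)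
    have hT2c := hCT ⟨c, hc⟩
    rw [pComp_apply hc₁ hc₂] at hT2c
    rw [← pow_le_pow_iff_left₀ (norm_nonneg _) (by positivity) two_ne_zero, mul_pow,
      Real.sq_sqrt hC]
    nlinarith [norm_nonneg c]
  exact ⟨√C, Real.sqrt_nonneg C, fun x =>
    hT.norm_le_of_dense hT.dense_pComp_self_domain (Real.sqrt_nonneg C) hbound (T.mem_graph x)⟩

section DiagonalGraph

variable {R E : Type*} [Ring R] [AddCommGroup E] [Module R E] {S : E →ₗ.[R] E}

/-- `(p, q)` lies in the graph of `S ⊕ S`. -/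
def InDiagGraph (S : E →ₗ.[R] E) (p q : E × E) : Prop :=
  (p.1, q.1) ∈ S.graph ∧ (p.2, q.2) ∈ S.graph

theorem inDiagGraph_pComp_iff {p r : E × E} :
    InDiagGraph (pComp S S) p r ↔ ∃ q, InDiagGraph S p q ∧ InDiagGraph S q r := by
  simp only [InDiagGraph, mem_graph_pComp_iff]
  constructor
  · rintro ⟨⟨q₁, hpq₁, hqr₁⟩, ⟨q₂, hpq₂, hqr₂⟩⟩
    exact ⟨(q₁, q₂), ⟨hpq₁, hpq₂⟩, ⟨hqr₁, hqr₂⟩⟩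
  · rintro ⟨q, ⟨hpq₁, hpq₂⟩, ⟨hqr₁, hqr₂⟩⟩
    exact ⟨⟨q.1, hpq₁, hqr₁⟩, ⟨q.2, hpq₂, hqr₂⟩⟩

theorem inDiagGraph_swap_iff {p q : E × E} :
    InDiagGraph S p.swap q.swap ↔ InDiagGraph S p q :=
  and_comm

variable (R E) in
def negSnd : (E × E) ≃ₗ[R] (E × E) :=
  (LinearEquiv.refl R E).prodCongr (LinearEquiv.neg R)

@[simp]
theorem negSnd_apply (p : E × E) : negSnd R E p = (p.1, -p.2) :=
  rfl

theorem inDiagGraph_negSnd_iff {p q : E × E} :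
    InDiagGraph S (negSnd R E p) (negSnd R E q) ↔ InDiagGraph S p q := by
  simp only [InDiagGraph, negSnd_apply]
  rw [← Prod.neg_mk, S.graph.neg_mem_iff]

end DiagonalGraph

theorem IsSelfAdjoint.inDiagGraph_iff_inner {𝕜 E : Type*} [RCLike 𝕜] [NormedAddCommGroup E]
    [InnerProductSpace 𝕜 E] [CompleteSpace E] {S : E →ₗ.[𝕜] E} (hS : IsSelfAdjoint S)
    {y w : E × E} :
    InDiagGraph S y w ↔ ∀ a c, InDiagGraph S a c →
      ⟪c.1, y.1⟫_𝕜 + ⟪c.2, y.2⟫_𝕜 = ⟪a.1, w.1⟫_𝕜 + ⟪a.2, w.2⟫_𝕜 := by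
  constructor
  · rintro ⟨hyw₁, hyw₂⟩ a c ⟨hac₁, hac₂⟩
    rw [hS.inner_eq_of_mem_graph hac₁ hyw₁, hS.inner_eq_of_mem_graph hac₂ hyw₂]
  · intro h
    refine ⟨hS.mem_graph_iff_inner.mpr fun a b hab => ?_,
      hS.mem_graph_iff_inner.mpr fun a b hab => ?_⟩
    · simpa using h (a, 0) (b, 0) ⟨hab, S.graph.zero_mem⟩
    · simpa using h (0, a) (0, b) ⟨S.graph.zero_mem, hab⟩

section TwistedDiagonal

variable {H : Type} [NormedAddCommGroup H] [InnerProductSpace ℂ H]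
  {S : H →ₗ.[ℂ] H} {M N : (H × H) ≃ₗ[ℂ] (H × H)} {X Y : HxH H →ₗ.[ℂ] HxH H}

/-- `X = M⁻¹ ∘ (S ⊕ S)`, stated on graphs. -/
def IsTwistedDiag (M : (H × H) ≃ₗ[ℂ] (H × H)) (S : H →ₗ.[ℂ] H) (X : HxH H →ₗ.[ℂ] HxH H) :
    Prop :=
  ∀ v w, (v, w) ∈ X.graph ↔ InDiagGraph S (prodE H v) (M (prodE H w))

theorem IsTwistedDiag.of_apply
    (hdom : X.domain = (Submodule.prod S.domain S.domain).comap (prodE H).toLinearMap)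
    (happ : ∀ x : X.domain, ∀ (h₁ : (prodE H (x : HxH H)).1 ∈ S.domain)
        (h₂ : (prodE H (x : HxH H)).2 ∈ S.domain),
      M (prodE H (X x)) = (S ⟨(prodE H (x : HxH H)).1, h₁⟩, S ⟨(prodE H (x : HxH H)).2, h₂⟩)) :
    IsTwistedDiag M S X := by
  intro v w
  have hmem : v ∈ X.domain ↔ (prodE H v).1 ∈ S.domain ∧ (prodE H v).2 ∈ S.domain := by
    rw [hdom]
    rfl
  constructor
  · rw [LinearPMap.mem_graph_iff]
    rintro ⟨⟨v, hv⟩, rfl, rfl⟩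
    obtain ⟨h₁, h₂⟩ := hmem.mp hv
    simp only [happ ⟨v, hv⟩ h₁ h₂]
    exact ⟨S.mem_graph ⟨_, h₁⟩, S.mem_graph ⟨_, h₂⟩⟩
  · rintro ⟨hw₁, hw₂⟩
    have h₁ := LinearPMap.mem_domain_of_mem_graph hw₁
    have h₂ := LinearPMap.mem_domain_of_mem_graph hw₂
    have hv := hmem.mpr ⟨h₁, h₂⟩
    refine (X.image_iff hv).mp ((prodE H).injective (M.injective ?_))
    rw [happ ⟨v, hv⟩ h₁ h₂]
    exact Prod.ext ((S.image_iff h₁).mpr hw₁) ((S.image_iff h₂).mpr hw₂)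

theorem IsTwistedDiag.domain_eq (hX : IsTwistedDiag M S X) :
    X.domain = (Submodule.prod S.domain S.domain).comap (prodE H).toLinearMap := by
  ext v
  rw [LinearPMap.mem_domain_iff]
  constructor
  · rintro ⟨w, hvw⟩
    obtain ⟨hw₁, hw₂⟩ := (hX v w).mp hvw
    exact ⟨LinearPMap.mem_domain_of_mem_graph hw₁, LinearPMap.mem_domain_of_mem_graph hw₂⟩
  · rintro ⟨h₁, h₂⟩
    refine ⟨(prodE H).symm (M.symm (S ⟨_, h₁⟩, S ⟨_, h₂⟩)), (hX _ _).mpr ?_⟩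
    simp only [LinearEquiv.apply_symm_apply]
    exact ⟨S.mem_graph ⟨_, h₁⟩, S.mem_graph ⟨_, h₂⟩⟩

theorem IsTwistedDiag.apply (hX : IsTwistedDiag M S X) (x : X.domain)
    (h₁ : (prodE H (x : HxH H)).1 ∈ S.domain) (h₂ : (prodE H (x : HxH H)).2 ∈ S.domain) :
    M (prodE H (X x)) = (S ⟨(prodE H (x : HxH H)).1, h₁⟩, S ⟨(prodE H (x : HxH H)).2, h₂⟩) := by
  obtain ⟨hx₁, hx₂⟩ := (hX x (X x)).mp (X.mem_graph x)
  exact Prod.ext ((S.image_iff h₁).mpr hx₁) ((S.image_iff h₂).mpr hx₂)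

theorem IsTwistedDiag.eq (hX : IsTwistedDiag M S X) (hY : IsTwistedDiag N S Y) (hMN : M = N) :
    X = Y :=
  LinearPMap.eq_of_eq_graph <| SetLike.ext fun ⟨v, w⟩ => by rw [hX, hY, hMN]

theorem IsTwistedDiag.pComp (hX : IsTwistedDiag M S X) (hY : IsTwistedDiag N S Y)
    (hN : ∀ p q, InDiagGraph S (N p) (N q) ↔ InDiagGraph S p q) :
    IsTwistedDiag (M.trans N) (pComp S S) (pComp X Y) := by
  unfold IsTwistedDiag at hX hY
  intro v w
  simp only [mem_graph_pComp_iff, hX, hY, inDiagGraph_pComp_iff, LinearEquiv.trans_apply]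
  constructor
  · rintro ⟨y, hvy, hyw⟩
    exact ⟨N (prodE H y), hvy, (hN _ _).mpr hyw⟩
  · rintro ⟨q, hvq, hqw⟩
    refine ⟨(prodE H).symm (N.symm q), ?_, (hN _ _).mp ?_⟩ <;> simpa using ‹_›

theorem dense_comap_prodE_prod {D₁ D₂ : Submodule ℂ H} (h₁ : Dense (D₁ : Set H))
    (h₂ : Dense (D₂ : Set H)) :
    Dense ((Submodule.prod D₁ D₂).comap (prodE H).toLinearMap : Set (HxH H)) :=
  (h₁.prod h₂).preimage (WithLp.prodContinuousLinearEquiv 2 ℂ H H).toHomeomorph.isOpenMap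

theorem IsTwistedDiag.isSelfAdjoint [CompleteSpace H] (hS : IsSelfAdjoint S)
    (hX : IsTwistedDiag M S X) (hM : ∀ p q, InDiagGraph S (M p) (M q) ↔ InDiagGraph S p q)
    (hMM : ∀ p, M (M p) = p)
    (hM_inner : ∀ p q : H × H,
      ⟪(M p).1, q.1⟫_ℂ + ⟪(M p).2, q.2⟫_ℂ = ⟪p.1, (M q).1⟫_ℂ + ⟪p.2, (M q).2⟫_ℂ) :
    IsSelfAdjoint X := by
  have hdense : Dense (X.domain : Set (HxH H)) :=
    hX.domain_eq ▸ dense_comap_prodE_prod hS.dense_domain hS.dense_domain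
  refine (LinearPMap.isSelfAdjoint_iff_mem_graph_iff hdense).mpr fun v w => ?_
  rw [hX, ← hM, hMM, hS.inDiagGraph_iff_inner]
  constructor
  · intro h a b hab
    calc ⟪b, v⟫_ℂ = ⟪(M (M (prodE H b))).1, (prodE H v).1⟫_ℂ
          + ⟪(M (M (prodE H b))).2, (prodE H v).2⟫_ℂ := by rw [hMM]; rfl
      _ = ⟪a, w⟫_ℂ := by rw [hM_inner, h _ _ ((hX a b).mp hab)]; rfl
  · intro h a c hac
    rw [← hM_inner]
    exact h ((prodE H).symm a) ((prodE H).symm (M c)) ((hX _ _).mpr (by simpa [hMM] using hac))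

theorem IsTwistedDiag.prodE_sub_apply
    (hX : IsTwistedDiag (LinearEquiv.prodComm ℂ H H ≪≫ₗ negSnd ℂ H) S X)
    (hY : IsTwistedDiag (negSnd ℂ H ≪≫ₗ LinearEquiv.prodComm ℂ H H) S Y) (z : (X - Y).domain)
    (h₁ : (prodE H (z : HxH H)).1 ∈ S.domain) (h₂ : (prodE H (z : HxH H)).2 ∈ S.domain) :
    prodE H ((X - Y) z) =
      ((-2 : ℂ) • S ⟨(prodE H (z : HxH H)).2, h₂⟩, (2 : ℂ) • S ⟨(prodE H (z : HxH H)).1, h₁⟩) := by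
  have hXz := hX.apply ⟨z, z.2.1⟩ h₁ h₂
  have hYz := hY.apply ⟨z, z.2.2⟩ h₁ h₂
  simp only [LinearEquiv.trans_apply, LinearEquiv.prodComm_apply, negSnd_apply, Prod.fst_swap,
    Prod.snd_swap, Prod.swap_prod_mk, Prod.mk.injEq, neg_eq_iff_eq_neg] at hXz hYz
  obtain ⟨hX₂, hX₁⟩ := hXz
  obtain ⟨hY₂, hY₁⟩ := hYz
  change prodE H (X ⟨z, z.2.1⟩ - Y ⟨z, z.2.2⟩) = _
  rw [_root_.map_sub]
  refine Prod.ext ?_ ?_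
  · rw [Prod.fst_sub, hX₁, hY₁]
    module
  · rw [Prod.snd_sub, hX₂, hY₂]
    module

end TwistedDiagonal

theorem IsBddOp.of_norm_le {E F : Type*} [NormedAddCommGroup E] [InnerProductSpace ℂ E]
    [NormedAddCommGroup F] [InnerProductSpace ℂ F] {S : E →ₗ.[ℂ] E} {X : F →ₗ.[ℂ] F}
    (hX : IsBddOp X) (h : ∀ x : S.domain, ∃ v : X.domain, ‖(v : F)‖ ≤ ‖(x : E)‖ ∧ ‖S x‖ ≤ ‖X v‖) :
    IsBddOp S := by
  obtain ⟨C, hC, hCX⟩ := hX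
  refine ⟨C, hC, fun x => ?_⟩
  obtain ⟨v, hvx, hSX⟩ := h x
  calc ‖S x‖ ≤ ‖X v‖ := hSX
    _ ≤ C * ‖(v : F)‖ := hCX v
    _ ≤ C * ‖(x : E)‖ := by gcongr

theorem IsBddOp.of_apply_snd {H : Type} [NormedAddCommGroup H] [InnerProductSpace ℂ H]
    {S : H →ₗ.[ℂ] H} {X : HxH H →ₗ.[ℂ] HxH H} {c : ℂ} (hc : 1 ≤ ‖c‖)
    (hdom : X.domain = (Submodule.prod S.domain S.domain).comap (prodE H).toLinearMap)
    (happ : ∀ z : X.domain, ∀ (h₁ : (prodE H (z : HxH H)).1 ∈ S.domain)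
        (_ : (prodE H (z : HxH H)).2 ∈ S.domain),
      (prodE H (X z)).2 = c • S ⟨(prodE H (z : HxH H)).1, h₁⟩)
    (hX : IsBddOp X) : IsBddOp S := by
  refine hX.of_norm_le fun x => ?_
  have hx : WithLp.toLp 2 ((x : H), 0) ∈ X.domain := by
    rw [hdom]
    exact ⟨x.2, S.domain.zero_mem⟩
  refine ⟨⟨_, hx⟩, by simp, ?_⟩
  calc ‖S x‖ ≤ ‖c • S x‖ := by
        rw [norm_smul]
        exact le_mul_of_one_le_left (norm_nonneg _) hc
    _ = ‖(X ⟨_, hx⟩).snd‖ := congrArg norm (happ ⟨_, hx⟩ x.2 S.domain.zero_mem).symm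
    _ ≤ ‖X ⟨_, hx⟩‖ := WithLp.norm_snd_le _ _

/-- Let `T` be an unbounded self-adjoint operator on a complex Hilbert space `H`.  On `H × H`
define `A` with domain `D(T) × D(T)` by `A (x, y) = (T y, T x)` and `B` with domain
`D(T) × D(T)` by `B (x, y) = (T x, -T y)`.  Then `A` and `B` are self-adjoint with
`D(A) = D(B)`, `A ∘ A = B ∘ B` (both given by `(x, y) ↦ ((T∘T) x, (T∘T) y)` on
`D(T∘T) × D(T∘T)`), so `A ∘ A - B ∘ B` is the zero operator on its domain, while
`A ∘ B - B ∘ A` has domain `D(T∘T) × D(T∘T)`, is given by `(x, y) ↦ (-2(T∘T) y, 2(T∘T) x)`,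
and is unbounded. -/
theorem stmt_13 {H : Type} [NormedAddCommGroup H] [InnerProductSpace ℂ H] [CompleteSpace H]
    (T : H →ₗ.[ℂ] H) (hT_sa : T† = T) (hT_unb : ¬ IsBddOp T)
    (A B : HxH H →ₗ.[ℂ] HxH H)
    (hAdom : A.domain = (Submodule.prod T.domain T.domain).comap (prodE H).toLinearMap)
    (hA : ∀ x : A.domain, ∀ (h1 : (prodE H (x : HxH H)).1 ∈ T.domain)
        (h2 : (prodE H (x : HxH H)).2 ∈ T.domain),
      prodE H (A x) = (T ⟨(prodE H (x : HxH H)).2, h2⟩, T ⟨(prodE H (x : HxH H)).1, h1⟩))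
    (hBdom : B.domain = (Submodule.prod T.domain T.domain).comap (prodE H).toLinearMap)
    (hB : ∀ x : B.domain, ∀ (h1 : (prodE H (x : HxH H)).1 ∈ T.domain)
        (h2 : (prodE H (x : HxH H)).2 ∈ T.domain),
      prodE H (B x) = (T ⟨(prodE H (x : HxH H)).1, h1⟩, -T ⟨(prodE H (x : HxH H)).2, h2⟩)) :
    A† = A ∧ B† = B ∧ A.domain = B.domain ∧
    pComp A A = pComp B B ∧
    (pComp A A).domain =
      (Submodule.prod (pComp T T).domain (pComp T T).domain).comap (prodE H).toLinearMap ∧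
    (∀ z : (pComp A A).domain, ∀ (h1 : (prodE H (z : HxH H)).1 ∈ (pComp T T).domain)
        (h2 : (prodE H (z : HxH H)).2 ∈ (pComp T T).domain),
      prodE H (pComp A A z) =
        (pComp T T ⟨(prodE H (z : HxH H)).1, h1⟩, pComp T T ⟨(prodE H (z : HxH H)).2, h2⟩)) ∧
    (∀ z : (pComp A A - pComp B B).domain, (pComp A A - pComp B B) z = 0) ∧
    (pComp A B - pComp B A).domain =
      (Submodule.prod (pComp T T).domain (pComp T T).domain).comap (prodE H).toLinearMap ∧
    (∀ z : (pComp A B - pComp B A).domain,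
      ∀ (h1 : (prodE H (z : HxH H)).1 ∈ (pComp T T).domain)
        (h2 : (prodE H (z : HxH H)).2 ∈ (pComp T T).domain),
      prodE H ((pComp A B - pComp B A) z) =
        ((-2 : ℂ) • pComp T T ⟨(prodE H (z : HxH H)).2, h2⟩,
         (2 : ℂ) • pComp T T ⟨(prodE H (z : HxH H)).1, h1⟩)) ∧
    ¬ IsBddOp (pComp A B - pComp B A) := by
  have hT : IsSelfAdjoint T := hT_sa
  have hA' : IsTwistedDiag (LinearEquiv.prodComm ℂ H H) T A :=
    .of_apply hAdom fun x h₁ h₂ => by simp [hA x h₁ h₂]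
  have hB' : IsTwistedDiag (negSnd ℂ H) T B :=
    .of_apply hBdom fun x h₁ h₂ => by simp [hB x h₁ h₂]
  have hAA := hA'.pComp hA' fun _ _ => inDiagGraph_swap_iff
  have hBB := hB'.pComp hB' fun _ _ => inDiagGraph_negSnd_iff
  have hAB := hA'.pComp hB' fun _ _ => inDiagGraph_negSnd_iff
  have hBA := hB'.pComp hA' fun _ _ => inDiagGraph_swap_iff
  have hAA_BB : pComp A A = pComp B B := hAA.eq hBB (LinearEquiv.ext fun _ => by simp)
  have hdom : (pComp A B - pComp B A).domain =
      (Submodule.prod (pComp T T).domain (pComp T T).domain).comap (prodE H).toLinearMap := by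
    rw [LinearPMap.sub_domain, hAB.domain_eq, hBA.domain_eq, inf_idem]
  refine ⟨hA'.isSelfAdjoint hT (fun _ _ => inDiagGraph_swap_iff) Prod.swap_swap
      fun _ _ => add_comm _ _,
    hB'.isSelfAdjoint hT (fun _ _ => inDiagGraph_negSnd_iff) (fun _ => by simp)
      fun _ _ => by simp [inner_neg_left, inner_neg_right],
    hAdom.trans hBdom.symm, hAA_BB, hAA.domain_eq,
    fun z h₁ h₂ => by simpa using hAA.apply z h₁ h₂, ?_, hdom, hAB.prodE_sub_apply hBA,
    fun hbdd => hT_unb <| hT.isBddOp_of_isBddOp_pComp_self <| .of_apply_snd (c := 2) (by norm_num)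
      hdom (fun z h₁ h₂ => by rw [hAB.prodE_sub_apply hBA z h₁ h₂]) hbdd⟩
  rw [hAA_BB]
  exact fun z => sub_self _
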